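/- arXiv:1604.03684 — 4 statements merged into one kernel-verified Lean document; each statement's English description precedes it below -/
import Mathlib

section
/- If a commutative noetherian ring R satisfies Serre's condition (S_n), then every n-syzygy finitely generated R-module satisfies (S_n). -/
/-! Induction on `n` along the defining sequences `0 → M → P → C → 0`, with `C` an
`(n-1)`-syzygy. Localizing at `p` keeps the sequence exact and makes `P_p` free, and the
depth lemma `depth M_p ≥ min (depth R_p, depth C_p + 1)` combines `(S_n)` for `R` with
`(S_{n-1})` for `C`. The depth lemma comes from the long exact cohomology sequence of
`0 → Hom(Q, M_p) → Hom(Q, P_p) → Hom(Q, C_p) → 0`, where `Q` is a projective resolution of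
the residue field; this sequence is exact because each term of `Q` is projective. -/

open CategoryTheory IsLocalRing

noncomputable section

/-- The Ext module `Ext^n_R(M, N)`. -/
noncomputable def extMod (R : Type) [CommRing R] (M N : ModuleCat R) (n : ℕ) : ModuleCat R :=
  ((Ext R (ModuleCat R) n).obj (Opposite.op M)).obj N

/-- `M` is an `n`-syzygy module: there is an exact sequence
`0 → M → P_{n-1} → ⋯ → P_0` with each `P_i` finitely generated projective. -/
def IsSyzygyOf (R : Type) [CommRing R] : ℕ → ModuleCat R → Prop
  | 0, _ => True
  | n + 1, M => ∃ (P : ModuleCat R) (f : M →ₗ[R] P), Module.Finite R P ∧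
      Module.Projective R P ∧ Function.Injective f ∧
      IsSyzygyOf R n (ModuleCat.of R (P ⧸ LinearMap.range f))

/-- A finite projective presentation `P₁ → P₀ → M → 0`. -/
structure FinProjPres (R : Type) [CommRing R] (M : ModuleCat R) where
  P0 : ModuleCat.{0} R
  P1 : ModuleCat.{0} R
  fin0 : Module.Finite R P0
  fin1 : Module.Finite R P1
  proj0 : Module.Projective R P0
  proj1 : Module.Projective R P1
  f : P1 →ₗ[R] P0
  g : P0 →ₗ[R] M
  surj : Function.Surjective g
  exact : LinearMap.range f = LinearMap.ker g

/-- The Auslander transpose with respect to a presentation: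
the cokernel of `Hom(f, R) : Hom(P₀, R) → Hom(P₁, R)`. -/
noncomputable def FinProjPres.Tr {R : Type} [CommRing R] {M : ModuleCat R}
    (pres : FinProjPres R M) : ModuleCat R :=
  ModuleCat.of R (Module.Dual R pres.P1 ⧸ LinearMap.range pres.f.dualMap)

/-- `M` is `n`-torsionfree: `Ext^i_R(Tr M, R) = 0` for `1 ≤ i ≤ n`. -/
def IsTorsionfreeOf (R : Type) [CommRing R] (n : ℕ) (M : ModuleCat R) : Prop :=
  ∀ pres : FinProjPres R M, ∀ i : ℕ, 1 ≤ i → i ≤ n →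
    Subsingleton (extMod R pres.Tr (ModuleCat.of R R) i)

/-- The depth of a module over a local ring, as the least `n` with
`Ext^n(k, M) ≠ 0`. -/
noncomputable def localDepth (R : Type) [CommRing R] [IsLocalRing R] (M : ModuleCat R) : ℕ∞ :=
  sInf {n : ℕ∞ | ∃ m : ℕ, n = m ∧
    Nontrivial (extMod R (ModuleCat.of R (ResidueField R)) M m)}

/-- The height of a prime ideal. -/
noncomputable def primeHt {R : Type} [CommRing R] (p : PrimeSpectrum R) : ℕ∞ :=
  Order.height p

/-- Serre's condition `(S_n)` for a module. -/
def SerreCond (R : Type) [CommRing R] (n : ℕ) (M : ModuleCat R) : Prop :=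
  ∀ p : PrimeSpectrum R,
    min (n : ℕ∞) (primeHt p) ≤
      localDepth (Localization.AtPrime p.asIdeal)
        (ModuleCat.of (Localization.AtPrime p.asIdeal)
          (LocalizedModule p.asIdeal.primeCompl M))

/-- A local ring is Gorenstein if it has finite injective dimension over itself. -/
def IsGorensteinLocalRing (R : Type) [CommRing R] [IsLocalRing R] : Prop :=
  ∃ n : ℕ, ∀ (M : ModuleCat R) (i : ℕ), n < i →
    Subsingleton (extMod R M (ModuleCat.of R R) i)

end

noncomputable section

/-- The depth of the localization `R_p` as a module over itself. -/
noncomputable def ringDepthAt (R : Type) [CommRing R] (p : PrimeSpectrum R) : ℕ∞ :=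
  localDepth (Localization.AtPrime p.asIdeal)
    (ModuleCat.of (Localization.AtPrime p.asIdeal) (Localization.AtPrime p.asIdeal))

/-- `R_p` is a Gorenstein local ring. -/
def GorensteinAt (R : Type) [CommRing R] (p : PrimeSpectrum R) : Prop :=
  IsGorensteinLocalRing (Localization.AtPrime p.asIdeal)

/-- The condition `(G_{n-1})`: `R_p` is Gorenstein for every prime `p` with `ht p ≤ n - 1`. -/
def CondG (R : Type) [CommRing R] (n : ℕ) : Prop :=
  ∀ p : PrimeSpectrum R, primeHt p < (n : ℕ∞) → GorensteinAt R p

/-- The condition `(G̃_{n-1})`: `R_p` is Gorenstein for every prime `p` with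
`depth R_p ≤ n - 1`. -/
def CondGt (R : Type) [CommRing R] (n : ℕ) : Prop :=
  ∀ p : PrimeSpectrum R, ringDepthAt R p < (n : ℕ∞) → GorensteinAt R p

end

open Limits

section HomComplex

variable {S : Type} [CommRing S]

def ChainComplex.linearYonedaMap (K : ChainComplex (ModuleCat S) ℕ) {A B : ModuleCat S}
    (g : A ⟶ B) : K.linearYonedaObj S A ⟶ K.linearYonedaObj S B where
  f i := ModuleCat.ofHom (Linear.rightComp S (K.X i) g)
  comm' i j _ := by
    ext (x : K.X i ⟶ A)
    exact Category.assoc (K.d j i) x g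

def ChainComplex.linearYonedaShortComplex (K : ChainComplex (ModuleCat S) ℕ)
    (sc : ShortComplex (ModuleCat S)) : ShortComplex (CochainComplex (ModuleCat S) ℕ) :=
  .mk (K.linearYonedaMap sc.f) (K.linearYonedaMap sc.g) <| by
    ext i (x : K.X i ⟶ sc.X₁)
    change (x ≫ sc.f) ≫ sc.g = 0
    rw [Category.assoc, sc.zero, comp_zero]

lemma CategoryTheory.ShortComplex.ShortExact.linearYonedaShortComplex
    {sc : ShortComplex (ModuleCat S)} (hsc : sc.ShortExact) (K : ChainComplex (ModuleCat S) ℕ)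
    [∀ i, Projective (K.X i)] :
    (K.linearYonedaShortComplex sc).ShortExact := by
  have := hsc.mono_f
  have := hsc.epi_g
  refine HomologicalComplex.shortExact_of_degreewise_shortExact _ fun i => ?_
  refine ModuleCat.shortComplex_shortExact _ (fun (y : K.X i ⟶ sc.X₂) => ?_)
    (fun (x x' : K.X i ⟶ sc.X₁) h => (cancel_mono sc.f).1 h)
    fun (z : K.X i ⟶ sc.X₃) =>
      ⟨Projective.factorThru z sc.g, Projective.factorThru_comp z sc.g⟩
  constructor
  · exact fun hy => ⟨hsc.exact.lift y hy, hsc.exact.lift_f y hy⟩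
  · rintro ⟨x : K.X i ⟶ sc.X₁, rfl⟩
    change (x ≫ sc.f) ≫ sc.g = 0
    rw [Category.assoc, sc.zero, comp_zero]

end HomComplex

section ExtVanishing

variable {S : Type} [CommRing S]

lemma subsingleton_extMod_iff_isZero_homology {X : ModuleCat S} (Q : ProjectiveResolution X)
    (N : ModuleCat S) (m : ℕ) :
    Subsingleton (extMod S X N m) ↔ IsZero ((Q.complex.linearYonedaObj S N).homology m) := by
  rw [← ModuleCat.isZero_iff_subsingleton]
  exact (Q.isoExt m N).isZero_iff

lemma subsingleton_extMod_of_subsingleton (X N : ModuleCat S) [Subsingleton N] (m : ℕ) :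
    Subsingleton (extMod S X N m) := by
  rw [subsingleton_extMod_iff_isZero_homology (projectiveResolution X),
    ← HomologicalComplex.exactAt_iff_isZero_homology]
  refine ShortComplex.exact_of_isZero_X₂ _ (ModuleCat.isZero_iff_subsingleton.2 ?_)
  exact ⟨fun a b => ModuleCat.hom_ext (LinearMap.ext fun _ => Subsingleton.elim _ _)⟩

lemma extMod_congr_subsingleton (X : ModuleCat S) {N N' : ModuleCat S} (e : N ≅ N') (m : ℕ) :
    Subsingleton (extMod S X N m) ↔ Subsingleton (extMod S X N' m) := by
  simp only [← ModuleCat.isZero_iff_subsingleton]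
  exact (((Ext S (ModuleCat S) m).obj (Opposite.op X)).mapIso e).isZero_iff

namespace CategoryTheory.ShortComplex.ShortExact

variable {sc : ShortComplex (ModuleCat S)}

lemma subsingleton_extMod_zero_X₁ (hsc : sc.ShortExact) (X : ModuleCat S)
    (h₂ : Subsingleton (extMod S X sc.X₂ 0)) : Subsingleton (extMod S X sc.X₁ 0) := by
  let Q := projectiveResolution X
  have : Mono (Q.complex.linearYonedaMap sc.f) := (hsc.linearYonedaShortComplex Q.complex).mono_f
  rw [subsingleton_extMod_iff_isZero_homology Q] at h₂ ⊢
  -- no differential enters degree `0`, so `H⁰` is a subobject of the degree `0` term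
  have := HomologicalComplex.mono_homologyMap_of_mono_of_not_rel
    (Q.complex.linearYonedaMap sc.f) 0 (fun i => by simp)
  exact h₂.of_mono (HomologicalComplex.homologyMap (Q.complex.linearYonedaMap sc.f) 0)

lemma subsingleton_extMod_succ_X₁ (hsc : sc.ShortExact) (X : ModuleCat S) (m : ℕ)
    (h₂ : Subsingleton (extMod S X sc.X₂ (m + 1)))
    (h₃ : Subsingleton (extMod S X sc.X₃ m)) : Subsingleton (extMod S X sc.X₁ (m + 1)) := by
  let Q := projectiveResolution X
  rw [subsingleton_extMod_iff_isZero_homology Q] at h₂ h₃ ⊢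
  exact ((hsc.linearYonedaShortComplex Q.complex).homology_exact₁ m (m + 1) rfl).isZero_X₂
    (h₃.eq_of_src _ _) (h₂.eq_of_tgt _ _)

lemma subsingleton_extMod_X₂ (hsc : sc.ShortExact) (X : ModuleCat S) (m : ℕ)
    (h₁ : Subsingleton (extMod S X sc.X₁ m))
    (h₃ : Subsingleton (extMod S X sc.X₃ m)) : Subsingleton (extMod S X sc.X₂ m) := by
  let Q := projectiveResolution X
  rw [subsingleton_extMod_iff_isZero_homology Q] at h₁ h₃ ⊢
  exact ((hsc.linearYonedaShortComplex Q.complex).homology_exact₂ m).isZero_X₂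
    (h₁.eq_of_src _ _) (h₃.eq_of_tgt _ _)

end CategoryTheory.ShortComplex.ShortExact

end ExtVanishing

section Depth

variable {S : Type} [CommRing S] [IsLocalRing S]

lemma le_localDepth_iff {N : ModuleCat S} {d : ℕ∞} :
    d ≤ localDepth S N ↔ ∀ m : ℕ, (m : ℕ∞) < d →
      Subsingleton (extMod S (ModuleCat.of S (ResidueField S)) N m) := by
  refine ⟨fun hd m hm => ?_, fun h => le_sInf ?_⟩
  · by_contra hnt
    rw [not_subsingleton_iff_nontrivial] at hnt
    exact (hm.trans_le hd).not_ge (sInf_le ⟨m, rfl, hnt⟩)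
  · rintro _ ⟨m, rfl, hnt⟩
    by_contra! hm
    exact not_subsingleton _ (h m hm)

lemma localDepth_congr {N N' : ModuleCat S} (e : N ≅ N') :
    localDepth S N = localDepth S N' := by
  refine le_antisymm ?_ ?_ <;> refine le_localDepth_iff.2 fun m hm => ?_
  · exact (extMod_congr_subsingleton _ e m).1 (le_localDepth_iff.1 le_rfl m hm)
  · exact (extMod_congr_subsingleton _ e m).2 (le_localDepth_iff.1 le_rfl m hm)

lemma localDepth_eq_top_of_subsingleton (N : ModuleCat S) [Subsingleton N] :
    localDepth S N = ⊤ :=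
  top_le_iff.1 <| le_localDepth_iff.2 fun m _ => subsingleton_extMod_of_subsingleton _ N m

namespace CategoryTheory.ShortComplex.ShortExact

variable {sc : ShortComplex (ModuleCat S)}

lemma min_localDepth_le_localDepth_X₁ (hsc : sc.ShortExact) :
    min (localDepth S sc.X₂) (localDepth S sc.X₃ + 1) ≤ localDepth S sc.X₁ := by
  refine le_localDepth_iff.2 fun m hm => ?_
  have h₂ := le_localDepth_iff.1 (min_le_left _ _) m hm
  cases m with
  | zero => exact hsc.subsingleton_extMod_zero_X₁ _ h₂
  | succ m =>
    refine hsc.subsingleton_extMod_succ_X₁ _ m h₂ (le_localDepth_iff.1 le_rfl m ?_)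
    have := hm.trans_le (min_le_right _ _)
    push_cast at this
    exact (ENat.add_lt_add_iff_right ENat.one_ne_top).1 this

lemma min_localDepth_le_localDepth_X₂ (hsc : sc.ShortExact) :
    min (localDepth S sc.X₁) (localDepth S sc.X₃) ≤ localDepth S sc.X₂ :=
  le_localDepth_iff.2 fun m hm => hsc.subsingleton_extMod_X₂ _ m
    (le_localDepth_iff.1 (min_le_left _ _) m hm) (le_localDepth_iff.1 (min_le_right _ _) m hm)

end CategoryTheory.ShortComplex.ShortExact

lemma min_localDepth_le_localDepth_prod (A B : Type) [AddCommGroup A] [Module S A]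
    [AddCommGroup B] [Module S B] :
    min (localDepth S (.of S A)) (localDepth S (.of S B)) ≤ localDepth S (.of S (A × B)) :=
  (ModuleCat.shortComplex_shortExact (.mk (ModuleCat.ofHom (LinearMap.inl S A B))
    (ModuleCat.ofHom (LinearMap.snd S A B)) (by ext; simp)) Function.Exact.inl_snd
    LinearMap.inl_injective LinearMap.snd_surjective).min_localDepth_le_localDepth_X₂

lemma localDepth_self_le_localDepth_pi_fin (r : ℕ) :
    localDepth S (.of S S) ≤ localDepth S (.of S (Fin r → S)) := by
  induction r with
  | zero => simp [localDepth_eq_top_of_subsingleton (.of S (Fin 0 → S))]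
  | succ r ih =>
    rw [← localDepth_congr (Fin.consLinearEquiv S fun _ : Fin (r + 1) => S).toModuleIso]
    exact (le_min le_rfl ih).trans (min_localDepth_le_localDepth_prod S (Fin r → S))

lemma localDepth_self_le_localDepth_of_free (B : Type) [AddCommGroup B] [Module S B]
    [Module.Free S B] [Module.Finite S B] :
    localDepth S (.of S S) ≤ localDepth S (.of S B) :=
  (localDepth_self_le_localDepth_pi_fin _).trans_eq
    (localDepth_congr (Module.finBasis S B).equivFun.symm.toModuleIso)

lemma min_localDepth_le_localDepth_of_exact {A B C : Type} [AddCommGroup A] [Module S A]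
    [AddCommGroup B] [Module S B] [AddCommGroup C] [Module S C] [Module.Free S B]
    [Module.Finite S B] {f : A →ₗ[S] B} {g : B →ₗ[S] C} (hf : Function.Injective f)
    (hg : Function.Surjective g) (hfg : Function.Exact f g) :
    min (localDepth S (.of S S)) (localDepth S (.of S C) + 1) ≤ localDepth S (.of S A) :=
  (min_le_min_right _ (localDepth_self_le_localDepth_of_free B)).trans
    (ModuleCat.shortComplex_shortExact (.mk (ModuleCat.ofHom f) (ModuleCat.ofHom g)
      (by ext; exact hfg.apply_apply_eq_zero _)) hfg hf hg).min_localDepth_le_localDepth_X₁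

end Depth

section SerreCond

variable {R : Type} [CommRing R]

lemma SerreCond.mono {m n : ℕ} (hmn : m ≤ n) {M : ModuleCat R} (h : SerreCond R n M) :
    SerreCond R m M :=
  fun p => (min_le_min_right _ (Nat.cast_le.2 hmn)).trans (h p)

lemma localDepth_localizedModule_self (p : PrimeSpectrum R) :
    localDepth (Localization.AtPrime p.asIdeal)
      (.of _ (LocalizedModule p.asIdeal.primeCompl R)) =
    localDepth (Localization.AtPrime p.asIdeal) (.of _ (Localization.AtPrime p.asIdeal)) :=
  localDepth_congr (IsLocalizedModule.iso p.asIdeal.primeCompl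
    (Algebra.linearMap R (Localization.AtPrime p.asIdeal))
    |>.extendScalarsOfIsLocalization p.asIdeal.primeCompl _).toModuleIso

lemma SerreCond.of_injective {n : ℕ} (hR : SerreCond R (n + 1) (.of R R)) {M P : ModuleCat R}
    [Module.Finite R P] [Module.Projective R P] {f : M →ₗ[R] P} (hf : Function.Injective f)
    (hC : SerreCond R n (.of R (P ⧸ LinearMap.range f))) : SerreCond R (n + 1) M := by
  intro p
  let Rₚ := Localization.AtPrime p.asIdeal
  let T := p.asIdeal.primeCompl
  have : Module.Free Rₚ (LocalizedModule T P) := Module.free_of_flat_of_isLocalRing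
  have hdepth := min_localDepth_le_localDepth_of_exact (S := Rₚ)
    (LocalizedModule.map_injective T f hf)
    (LocalizedModule.map_surjective T _ (LinearMap.range f).mkQ_surjective)
    (LocalizedModule.map_exact T _ _ (LinearMap.exact_map_mkQ_range f))
  calc min ((n + 1 : ℕ) : ℕ∞) (primeHt p)
      ≤ min (min ((n + 1 : ℕ) : ℕ∞) (primeHt p)) (min (n : ℕ∞) (primeHt p) + 1) := by
        refine le_min le_rfl ?_
        rw [← min_add_add_right, Nat.cast_succ]
        exact min_le_min le_rfl le_self_add
    _ ≤ _ := min_le_min ((hR p).trans_eq (localDepth_localizedModule_self p))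
        (add_le_add_left (hC p) 1)
    _ ≤ _ := hdepth

end SerreCond

theorem serreCond_of_isSyzygyOf_general (R : Type) [CommRing R] (n : ℕ)
    (hR : SerreCond R n (ModuleCat.of R R))
    (M : ModuleCat R) (hM : IsSyzygyOf R n M) :
    SerreCond R n M := by
  induction n generalizing M with
  | zero => exact fun _ => by simp
  | succ n ih =>
    obtain ⟨P, f, _, _, hf, hC⟩ := hM
    exact hR.of_injective hf (ih (hR.mono n.le_succ) _ hC)

/-- If `R` satisfies `(S_n)`, then every `n`-syzygy finitely generated module satisfies
`(S_n)`. -/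
theorem serreCond_of_isSyzygyOf (R : Type) [CommRing R] [IsNoetherianRing R] (n : ℕ)
    (hR : SerreCond R n (ModuleCat.of R R))
    (M : ModuleCat R) (hfin : Module.Finite R M) (hM : IsSyzygyOf R n M) :
    SerreCond R n M :=
  serreCond_of_isSyzygyOf_general R n hR M hM
end

section
/- Let (R, m, k) be a noetherian local ring of depth at most n−1, and suppose Ext^j_R(Ext^n_R(k, R), R) = 0 for all integers j < n. Then Ext^n_R(k, R) = 0. -/
open CategoryTheory IsLocalRing

/-!
If `E = Ext^n_R(k, R)` were nonzero, it would be a nonzero `k`-vector space, since the maximal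
ideal annihilates `k`, hence also every `Ext^i_R(k, -)`. A linear form sending a nonzero
vector to `1` makes `k` a retract of `E`, so `Ext^j_R(k, R)` is a retract of `Ext^j_R(E, R) = 0`
for every `j < n`. But `depth R < n` means that some `Ext^j_R(k, R)` with `j < n` is nonzero.
-/

open HomologicalComplex

lemma HomologicalComplex.homologyMap_smul {A : Type*} [Semiring A] {C : Type*} [Category C]
    [Preadditive C] [Linear A C] {ι : Type*} {c : ComplexShape ι} {K L : HomologicalComplex C c}
    (f : K ⟶ L) (a : A) (i : ι) [K.HasHomology i] [L.HasHomology i] :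
    homologyMap (a • f) i = a • homologyMap f i :=
  ShortComplex.homologyMap_smul ((shortComplexFunctor C c i).map f) a

section

variable {R : Type} [CommRing R]

lemma extMod_smul_eq_zero {M : ModuleCat R} {r : R} (hr : ∀ m : M, r • m = 0)
    (N : ModuleCat R) (n : ℕ) (x : extMod R M N n) : r • x = 0 := by
  -- `r • 𝟙` on a projective resolution `P` lifts `r • 𝟙 M = 0`, hence is null-homotopic, and so
  -- is `r • 𝟙` on `K = Hom(P, N)`, whose homology is `Ext^n(M, N)`.
  let P : ProjectiveResolution M := HasProjectiveResolution.out.some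
  have hπ : (r • 𝟙 P.complex) ≫ P.π = 0 := by
    rw [Linear.smul_comp, Category.id_comp]
    ext v : 3
    exact hr (P.π.f 0 v)
  let G := ((linearYoneda R (ModuleCat R)).obj N).rightOp
  let K := (unopFunctor _ _).obj (.op ((G.mapHomologicalComplex _).obj P.complex))
  have H := (G.mapHomotopy (P.liftHomotopyZero _ hπ)).unop
  have hsmul : (unopFunctor _ _).map ((G.mapHomologicalComplex _).map (r • 𝟙 P.complex)).op =
      r • 𝟙 K := by
    ext i (φ : P.complex.X i ⟶ N)
    exact (Linear.smul_comp _ _ _ _ _ _).trans (congrArg _ (Category.id_comp φ))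
  have hzero : (unopFunctor _ _).map ((G.mapHomologicalComplex _).map 0).op = (0 : K ⟶ K) := by
    ext i φ
    exact Limits.zero_comp (f := φ)
  rw [hsmul, hzero] at H
  have hK : r • 𝟙 (K.homology n) = 0 := by
    rw [← homologyMap_id, ← homologyMap_smul (A := R), H.homologyMap_eq, homologyMap_zero]
  let e : extMod R M N n ≅ K.homology n := P.isoExt n N
  apply e.toLinearEquiv.injective
  rw [map_smul, map_zero]
  exact congr(ModuleCat.Hom.hom $hK (e.hom x))

lemma CategoryTheory.Retract.subsingleton_extMod {M E : ModuleCat R} (h : Retract M E)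
    (N : ModuleCat R) (n : ℕ) [Subsingleton (extMod R E N n)] : Subsingleton (extMod R M N n) :=
  let h' : Retract (extMod R M N n) (extMod R E N n) :=
    h.op.map ((Ext R (ModuleCat R) n).flip.obj N)
  ((ModuleCat.mono_iff_injective h'.i).1 inferInstance).subsingleton

end

section

variable {R : Type} [CommRing R] [IsLocalRing R]

lemma extMod_residueField_smul_eq_zero {r : R} (hr : r ∈ maximalIdeal R) (N : ModuleCat R)
    (n : ℕ) (x : extMod R (ModuleCat.of R (ResidueField R)) N n) : r • x = 0 :=
  extMod_smul_eq_zero (fun y ↦ by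
    rw [Algebra.smul_def, ResidueField.algebraMap_eq, (residue_eq_zero_iff r).2 hr, zero_mul])
    N n x

lemma nonempty_retract_residueField_of_smul_eq_zero (E : ModuleCat R) [Nontrivial E]
    (hE : ∀ r ∈ maximalIdeal R, ∀ x : E, r • x = 0) :
    Nonempty (Retract (ModuleCat.of R (ResidueField R)) E) := by
  obtain ⟨x, hx⟩ := exists_ne (0 : E)
  have htors : Module.IsTorsionBySet R E (maximalIdeal R) := fun y r ↦ hE r r.2 y
  let _ : Module (ResidueField R) E := htors.module
  have : IsScalarTower R (ResidueField R) E := htors.isScalarTower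
  obtain ⟨f, hf⟩ := Module.Projective.exists_dual_eq_one (ResidueField R) hx
  exact ⟨{ i := ModuleCat.ofHom ((LinearMap.toSpanSingleton (ResidueField R) E x).restrictScalars R)
           r := ModuleCat.ofHom (f.restrictScalars R)
           retract := by ext a; simp [hf] }⟩

lemma exists_nontrivial_extMod_of_localDepth_lt {M : ModuleCat R} {n : ℕ}
    (h : localDepth R M < n) :
    ∃ j < n, Nontrivial (extMod R (ModuleCat.of R (ResidueField R)) M j) := by
  obtain ⟨_, ⟨j, rfl, hj⟩, hjn⟩ := sInf_lt_iff.mp h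
  exact ⟨j, by exact_mod_cast hjn, hj⟩

end

theorem ext_residue_vanishes_general (R : Type) [CommRing R] [IsLocalRing R] (n : ℕ)
    (hdepth : localDepth R (ModuleCat.of R R) < (n : ℕ∞))
    (hvan : ∀ j : ℕ, j < n → Subsingleton (extMod R
      (extMod R (ModuleCat.of R (IsLocalRing.ResidueField R)) (ModuleCat.of R R) n)
      (ModuleCat.of R R) j)) :
    Subsingleton (extMod R (ModuleCat.of R (IsLocalRing.ResidueField R)) (ModuleCat.of R R) n) := by
  by_contra hE
  rw [not_subsingleton_iff_nontrivial] at hE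
  obtain ⟨j, hj, hne⟩ := exists_nontrivial_extMod_of_localDepth_lt hdepth
  obtain ⟨ret⟩ := nonempty_retract_residueField_of_smul_eq_zero _
    fun r hr ↦ extMod_residueField_smul_eq_zero hr (ModuleCat.of R R) n
  have := hvan j hj
  exact not_subsingleton _ (ret.subsingleton_extMod (ModuleCat.of R R) j)

/-- If `(R, m, k)` is a noetherian local ring of depth at most `n - 1` and
`Ext^j_R(Ext^n_R(k, R), R) = 0` for all `j < n`, then `Ext^n_R(k, R) = 0`. -/
theorem ext_residue_vanishes (R : Type) [CommRing R] [IsLocalRing R] [IsNoetherianRing R] (n : ℕ)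
    (hdepth : localDepth R (ModuleCat.of R R) < (n : ℕ∞))
    (hvan : ∀ j : ℕ, j < n → Subsingleton (extMod R
      (extMod R (ModuleCat.of R (IsLocalRing.ResidueField R)) (ModuleCat.of R R) n)
      (ModuleCat.of R R) j)) :
    Subsingleton (extMod R (ModuleCat.of R (IsLocalRing.ResidueField R)) (ModuleCat.of R R) n) :=
  ext_residue_vanishes_general R n hdepth hvan
end

section
/- Every n-torsionfree finitely generated module over a commutative noetherian ring is an n-syzygy module. -/
open CategoryTheory IsLocalRing

/-!
Choose a finite projective presentation `P₁ → P₀ → M → 0`, so that `Tr M = coker (P₀* → P₁*)`,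
and extend `P₀* → P₁*` to a resolution `⋯ → F₃ → F₂ → P₀* → P₁*` of `Tr M` by finite free
modules (finiteness needs `R` noetherian). Dualising gives the complex
`P₁ → P₀ → F₂* → F₃* → ⋯`, whose cohomology at `P₀, F₂*, …, F_n*` is `Ext^i(Tr M, R)` for
`1 ≤ i ≤ n`. When these vanish, `M = coker (P₁ → P₀)` embeds into `F₂*` and the sequence
`0 → M → F₂* → ⋯ → F_{n+1}*` is exact.
-/

universe u v

noncomputable section

open CategoryTheory Module

namespace ModuleCat

variable {R : Type u} [CommRing R]

/-- A spanning set of `ker f`, chosen finite whenever `ker f` is finitely generated. -/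
def kerGenerators {X Y : ModuleCat.{u} R} (f : X ⟶ Y) : Set X :=
  open Classical in
  if h : (LinearMap.ker f.hom).FG then ↑h.choose else ↑(LinearMap.ker f.hom)

lemma range_linearCombination_kerGenerators {X Y : ModuleCat.{u} R} (f : X ⟶ Y) :
    LinearMap.range (Finsupp.linearCombination R ((↑) : kerGenerators f → X)) =
      LinearMap.ker f.hom := by
  rw [Finsupp.range_linearCombination, Subtype.range_coe, kerGenerators]
  split_ifs with h
  · exact h.choose_spec
  · exact Submodule.span_eq _

def kerCover {X Y : ModuleCat.{u} R} (f : X ⟶ Y) :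
    Σ' (F : ModuleCat.{u} R) (d : F ⟶ X), d ≫ f = 0 :=
  ⟨of R (kerGenerators f →₀ R), ofHom (Finsupp.linearCombination R (↑)), hom_ext <|
    LinearMap.range_le_ker_iff.1 (range_linearCombination_kerGenerators f).le⟩

section kerCover

variable {X Y : ModuleCat.{u} R} (f : X ⟶ Y)

lemma range_kerCover : LinearMap.range (kerCover f).2.1.hom = LinearMap.ker f.hom :=
  range_linearCombination_kerGenerators f

instance : Module.Free R (kerCover f).1 :=
  inferInstanceAs (Module.Free R (kerGenerators f →₀ R))

lemma finite_kerCover (h : (LinearMap.ker f.hom).FG) : Module.Finite R (kerCover f).1 := by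
  have : Finite (kerGenerators f) := by
    simp only [kerGenerators, dif_pos h]
    infer_instance
  exact inferInstanceAs (Module.Finite R (kerGenerators f →₀ R))

end kerCover

/-- The complex `⋯ → F₃ → F₂ → F₁ → F₀` extending `d : F₁ ⟶ F₀`, in which each `F_{n+2}` is
the `kerCover` of the previous differential. -/
def kerCoverComplex {F₀ F₁ : ModuleCat.{u} R} (d : F₁ ⟶ F₀) : ChainComplex (ModuleCat.{u} R) ℕ :=
  ChainComplex.mk' F₀ F₁ d kerCover

section kerCoverComplex

variable {F₀ F₁ : ModuleCat.{u} R} (d : F₁ ⟶ F₀)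

@[simp]
lemma kerCoverComplex_d_one_zero : (kerCoverComplex d).d 1 0 = d :=
  ChainComplex.mk'_d_1_0 _ _ _ _

lemma range_kerCoverComplex_d (n : ℕ) :
    LinearMap.range ((kerCoverComplex d).d (n + 2) (n + 1)).hom =
      LinearMap.ker ((kerCoverComplex d).d (n + 1) n).hom := by
  rw [kerCoverComplex, ChainComplex.mk'_d, hom_comp, LinearMap.range_comp_of_range_eq_top _
    (LinearMap.range_eq_top.2 ((epi_iff_surjective _).1 inferInstance))]
  exact range_kerCover _

lemma kerCoverComplex_exactAt_succ (n : ℕ) : (kerCoverComplex d).ExactAt (n + 1) := by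
  rw [HomologicalComplex.exactAt_iff' _ (n + 2) (n + 1) n (by simp) (by simp),
    ShortComplex.moduleCat_exact_iff_range_eq_ker]
  exact range_kerCoverComplex_d d n

instance kerCoverComplex_free (n : ℕ) : Module.Free R ((kerCoverComplex d).X (n + 2)) :=
  Module.Free.of_equiv (ChainComplex.mk'XIso _ _ _ _ n).toLinearEquiv.symm

instance kerCoverComplex_finite [IsNoetherianRing R] [Module.Finite R F₁] (n : ℕ) :
    Module.Finite R ((kerCoverComplex d).X (n + 1)) := by
  induction n with
  | zero => assumption
  | succ n ih =>
    have := finite_kerCover ((kerCoverComplex d).d (n + 1) n) (IsNoetherian.noetherian _)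
    exact this.equiv (ChainComplex.mk'XIso _ _ _ _ n).toLinearEquiv.symm

end kerCoverComplex

def projectiveResolutionOfExact (C : ChainComplex (ModuleCat.{u} R) ℕ)
    (hproj : ∀ n, Module.Projective R (C.X n)) (hC : ∀ n, C.ExactAt (n + 1))
    {Z : ModuleCat.{u} R} (π : C.X 0 ⟶ Z) (hπ : Function.Surjective π)
    (hker : LinearMap.range (C.d 1 0).hom = LinearMap.ker π.hom) :
    ProjectiveResolution Z where
  complex := C
  projective n := have := hproj n; inferInstance
  π := (ChainComplex.toSingle₀Equiv _ _).symm ⟨π, hom_ext (LinearMap.range_le_ker_iff.1 hker.le)⟩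
  quasiIso := ⟨fun n => by
    cases n with
    | zero =>
      rw [ChainComplex.quasiIsoAt₀_iff, ShortComplex.quasiIso_iff_of_zeros']
      · have w : C.d 1 0 ≫ π = 0 := hom_ext (LinearMap.range_le_ker_iff.1 hker.le)
        refine (ShortComplex.exact_and_epi_g_iff_of_iso (S₂ := ShortComplex.mk _ _ w) ?_).2
          ⟨(ShortComplex.moduleCat_exact_iff_range_eq_ker _).2 hker,
            (epi_iff_surjective _).2 hπ⟩
        exact ShortComplex.isoMk (Iso.refl _) (Iso.refl _) (Iso.refl _) (by rfl) (by rfl)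
      · exact C.shape _ _ (by simp)
      all_goals rfl
    | succ n =>
      rw [quasiIsoAt_iff_exactAt' _ _ (ChainComplex.exactAt_succ_single_obj _ _)]
      exact hC n⟩

lemma range_dualMap_eq_ker_dualMap_of_exactAt (C : ChainComplex (ModuleCat.{u} R) ℕ) (j : ℕ)
    (hC : (C.linearYonedaObj R (of R R)).ExactAt (j + 1)) :
    LinearMap.range (C.d (j + 1) j).hom.dualMap =
      LinearMap.ker (C.d (j + 2) (j + 1)).hom.dualMap := by
  refine le_antisymm (LinearMap.range_le_ker_iff.2 ?_) fun φ hφ => ?_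
  · rw [LinearMap.dualMap_comp_dualMap, ← hom_comp, C.d_comp_d, hom_zero,
      LinearMap.dualMap_def, map_zero]
  rw [HomologicalComplex.exactAt_iff' _ j (j + 1) (j + 2) (by simp) (by simp),
    ShortComplex.moduleCat_exact_iff] at hC
  obtain ⟨ψ, hψ⟩ := hC (ofHom φ) (hom_ext hφ)
  exact ⟨ψ.hom, congrArg Hom.hom hψ⟩

end ModuleCat

lemma CategoryTheory.ProjectiveResolution.range_dualMap_eq_ker_dualMap {R : Type u} [CommRing R]
    {Z : ModuleCat.{u} R} (P : ProjectiveResolution Z) (j : ℕ)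
    (hExt : Subsingleton (((Ext R (ModuleCat.{u} R) (j + 1)).obj (Opposite.op Z)).obj
      (ModuleCat.of R R))) :
    LinearMap.range (P.complex.d (j + 1) j).hom.dualMap =
      LinearMap.ker (P.complex.d (j + 2) (j + 1)).hom.dualMap :=
  ModuleCat.range_dualMap_eq_ker_dualMap_of_exactAt _ j <|
    (HomologicalComplex.exactAt_iff_isZero_homology _ _).2 <|
      (ModuleCat.isZero_of_subsingleton _).of_iso (P.isoExt (j + 1) _).symm

def LinearMap.quotientRangeEquivDualDual {R : Type u} [CommRing R] {N P : Type v}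
    [AddCommGroup N] [Module R N] [AddCommGroup P] [Module R P] [IsReflexive R N] [IsReflexive R P]
    (f : N →ₗ[R] P) :
    (P ⧸ LinearMap.range f) ≃ₗ[R] Dual R (Dual R P) ⧸ LinearMap.range f.dualMap.dualMap :=
  Submodule.Quotient.equiv _ _ (evalEquiv R P) <| by
    rw [← LinearMap.range_comp, evalEquiv_toLinearMap, ← Dual.eval_naturality,
      ← evalEquiv_toLinearMap, LinearMap.range_comp_of_range_eq_top _ (evalEquiv R N).range]

theorem IsSyzygyOf.of_linearEquiv {R : Type} [CommRing R] :
    ∀ {n : ℕ} {N : ModuleCat.{0} R} {M : ModuleCat.{v} R},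
      IsSyzygyOf R n N → (M ≃ₗ[R] N) → IsSyzygyOf R n M
  | 0, _, _, _, _ => trivial
  | _ + 1, _, M, ⟨P, f, _, _, hf, hQ⟩, e => by
    let f' : M →ₗ[R] ULift.{v} P := ULift.moduleEquiv.symm.toLinearMap ∘ₗ f ∘ₗ e.toLinearMap
    have hrange : (LinearMap.range f').map ULift.moduleEquiv.toLinearMap = LinearMap.range f := by
      rw [← LinearMap.range_comp, ← LinearMap.range_comp_of_range_eq_top f e.range]
      rfl
    exact ⟨ModuleCat.of R (ULift.{v} P), f', Module.Finite.ulift,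
      Module.Projective.of_equiv ULift.moduleEquiv.symm,
      ULift.moduleEquiv.symm.injective.comp (hf.comp e.injective),
      hQ.of_linearEquiv (Submodule.Quotient.equiv _ _ ULift.moduleEquiv hrange)⟩

theorem isSyzygyOf_quotient_ker {R : Type} [CommRing R] (n : ℕ) (V : ℕ → ModuleCat.{v} R)
    (d : ∀ k, V k →ₗ[R] V (k + 1)) (hfin : ∀ k < n, Module.Finite R (V (k + 1)))
    (hproj : ∀ k < n, Module.Projective R (V (k + 1)))
    (hexact : ∀ k, k + 1 < n → LinearMap.ker (d (k + 1)) = LinearMap.range (d k)) :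
    IsSyzygyOf R n (ModuleCat.of R (V 0 ⧸ LinearMap.ker (d 0))) := by
  induction n generalizing V with
  | zero => trivial
  | succ n ih =>
    refine ⟨V 1, (LinearMap.ker (d 0)).liftQ (d 0) le_rfl, hfin 0 n.succ_pos, hproj 0 n.succ_pos,
      LinearMap.ker_eq_bot.1 (Submodule.ker_liftQ_eq_bot _ _ _ le_rfl), ?_⟩
    rw [Submodule.range_liftQ]
    obtain _ | n := n
    · trivial
    rw [← hexact 0 (by omega)]
    exact ih (fun k => V (k + 1)) (fun k => d (k + 1)) (fun k hk => hfin (k + 1) (by omega))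
      (fun k hk => hproj (k + 1) (by omega)) (fun k hk => hexact (k + 1) (by omega))

namespace FinProjPres

lemma nonempty_of_finite {R : Type} [CommRing R] [IsNoetherianRing R] (M : ModuleCat.{v} R)
    [Module.Finite R M] : Nonempty (FinProjPres R M) := by
  obtain ⟨a, g, hg⟩ := Module.Finite.exists_fin' R M
  obtain ⟨b, s, hs⟩ := Module.Finite.exists_fin' R (LinearMap.ker g)
  exact ⟨⟨ModuleCat.of R (Fin a → R), ModuleCat.of R (Fin b → R), inferInstance, inferInstance,
    inferInstance, inferInstance, (LinearMap.ker g).subtype ∘ₗ s, g, hg, by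
      rw [LinearMap.range_comp, LinearMap.range_eq_top.2 hs, Submodule.map_top,
        Submodule.range_subtype]⟩⟩

variable {R : Type} [CommRing R] {M : ModuleCat.{v} R} (pres : FinProjPres R M)

instance : Module.Finite R pres.P0 := pres.fin0
instance : Module.Finite R pres.P1 := pres.fin1
instance : Module.Projective R pres.P0 := pres.proj0
instance : Module.Projective R pres.P1 := pres.proj1

def equivQuotientRange : M ≃ₗ[R] pres.P0 ⧸ LinearMap.range pres.f :=
  ((Submodule.quotEquivOfEq _ _ pres.exact).trans
    (LinearMap.quotKerEquivOfSurjective pres.g pres.surj)).symm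

def trResolution : ProjectiveResolution pres.Tr :=
  ModuleCat.projectiveResolutionOfExact
    (ModuleCat.kerCoverComplex (ModuleCat.ofHom pres.f.dualMap)) (fun
      | 0 => inferInstanceAs (Module.Projective R (Dual R pres.P1))
      | 1 => inferInstanceAs (Module.Projective R (Dual R pres.P0))
      | _ + 2 => inferInstance)
    (ModuleCat.kerCoverComplex_exactAt_succ _) (ModuleCat.ofHom (Submodule.mkQ _))
    (Submodule.mkQ_surjective _)
    (by rw [ModuleCat.kerCoverComplex_d_one_zero]; exact (Submodule.ker_mkQ _).symm)

@[simp]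
lemma trResolution_d_one_zero :
    pres.trResolution.complex.d 1 0 = ModuleCat.ofHom pres.f.dualMap :=
  ModuleCat.kerCoverComplex_d_one_zero _

instance (k : ℕ) : Module.Free R (pres.trResolution.complex.X (k + 2)) :=
  ModuleCat.kerCoverComplex_free _ k

instance [IsNoetherianRing R] (k : ℕ) : Module.Finite R (pres.trResolution.complex.X (k + 1)) :=
  ModuleCat.kerCoverComplex_finite _ k

end FinProjPres

end

/-- Auslander–Bridger: every `n`-torsionfree finitely generated module is `n`-syzygy. -/
theorem isSyzygyOf_of_isTorsionfreeOf (R : Type) [CommRing R] [IsNoetherianRing R] (n : ℕ)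
    (M : ModuleCat R) (hfin : Module.Finite R M) (h : IsTorsionfreeOf R n M) :
    IsSyzygyOf R n M := by
  obtain _ | n := n
  · trivial
  obtain ⟨pres⟩ := FinProjPres.nonempty_of_finite M
  let C := pres.trResolution.complex
  have hexact (j : ℕ) (hj : j ≤ n) : LinearMap.range (C.d (j + 1) j).hom.dualMap =
      LinearMap.ker (C.d (j + 2) (j + 1)).hom.dualMap :=
    pres.trResolution.range_dualMap_eq_ker_dualMap j (h pres (j + 1) (by omega) (by omega))
  have hsyz := isSyzygyOf_quotient_ker (n + 1)
    (fun k => ModuleCat.of R (Module.Dual R (C.X (k + 1))))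
    (fun k => (C.d (k + 2) (k + 1)).hom.dualMap) (fun _ _ => inferInstance)
    (fun _ _ => inferInstance) (fun k _ => (hexact (k + 1) (by omega)).symm)
  have hexact₀ := hexact 0 n.zero_le
  rw [FinProjPres.trResolution_d_one_zero] at hexact₀
  exact hsyz.of_linearEquiv (pres.equivQuotientRange ≪≫ₗ pres.f.quotientRangeEquivDualDual ≪≫ₗ
    Submodule.quotEquivOfEq _ _ hexact₀)
end

section
/- Let R be a commutative noetherian ring and n ≥ 0. If syz_n(R) = S_n(R), then R satisfies (S_n) and syz_n(R) is closed under extensions. -/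
open CategoryTheory IsLocalRing

/-!
`R` is projective, hence an `n`-syzygy, hence satisfies `(S_n)` by hypothesis. For
extensions, localize a short exact sequence `0 → L → M → N → 0` at `p`: applying `Hom(P_•, -)`
for a projective resolution `P_•` of the residue field gives a short exact sequence of Hom
complexes, and its homology sequence is the `Ext(k, -)` sequence. Hence
`depth M_p ≥ min (depth L_p) (depth N_p)`, so `S_n(R)` is closed under extensions, and so is
`syz_n(R) = S_n(R)`. Modules in other universes are first moved to `Type` via `Shrink`.
-/

open CategoryTheory Limits

universe v w

section HomComplex

variable {C : Type*} [Category C] [Abelian C] {α : Type*} [AddRightCancelSemigroup α] [One α]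
  (X : ChainComplex C α) (A : Type*) [Ring A] [Linear A C]

def ChainComplex.linearYonedaObjFunctor : C ⥤ CochainComplex (ModuleCat A) α where
  obj Y := X.linearYonedaObj A Y
  map φ :=
    { f i := ((linearCoyoneda A C).obj (Opposite.op (X.X i))).map φ
      comm' i j _ := by
        ext ψ
        exact (Category.assoc _ _ _).symm }
  map_id Y := by
    ext i ψ
    exact Category.comp_id ψ
  map_comp φ φ' := by
    ext i ψ
    exact (Category.assoc _ _ _).symm

instance : (X.linearYonedaObjFunctor A).Additive where
  map_add := by
    intros
    ext
    exact Preadditive.comp_add _ _ _ _ _ _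

end HomComplex

section Depth

variable {A : Type} [CommRing A]

lemma CategoryTheory.ShortComplex.ShortExact.map_linearCoyoneda_of_projective
    {S : ShortComplex (ModuleCat A)} (hS : S.ShortExact) (P : ModuleCat A) [Projective P] :
    (S.map ((linearCoyoneda A (ModuleCat A)).obj (Opposite.op P))).ShortExact := by
  have := hS.mono_f
  have := hS.epi_g
  refine .mk' ?_ ?_ ?_
  · rw [ShortComplex.moduleCat_exact_iff]
    intro (ψ : P ⟶ S.X₂) (hψ : ψ ≫ S.g = 0)
    exact ⟨hS.exact.lift ψ hψ, hS.exact.lift_f ψ hψ⟩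
  · rw [ModuleCat.mono_iff_injective]
    intro (ψ₁ : P ⟶ S.X₁) (ψ₂ : P ⟶ S.X₁) (h : ψ₁ ≫ S.f = ψ₂ ≫ S.f)
    exact (cancel_mono S.f).mp h
  · rw [ModuleCat.epi_iff_surjective]
    intro (ψ : P ⟶ S.X₃)
    exact ⟨Projective.factorThru ψ S.g, Projective.factorThru_comp ψ S.g⟩

lemma ChainComplex.shortExact_linearYonedaObjFunctor_map {α : Type*}
    [AddRightCancelSemigroup α] [One α] (X : ChainComplex (ModuleCat A) α)
    [∀ i, Projective (X.X i)] {S : ShortComplex (ModuleCat A)} (hS : S.ShortExact) :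
    (S.map (X.linearYonedaObjFunctor A)).ShortExact := by
  rw [HomologicalComplex.shortExact_iff_degreewise_shortExact]
  exact fun i ↦ hS.map_linearCoyoneda_of_projective (X.X i)

lemma isZero_extMod_of_shortExact (K : ModuleCat A) {S : ShortComplex (ModuleCat A)}
    (hS : S.ShortExact) (m : ℕ) (h₁ : IsZero (extMod A K S.X₁ m))
    (h₃ : IsZero (extMod A K S.X₃ m)) : IsZero (extMod A K S.X₂ m) := by
  obtain ⟨P⟩ : Nonempty (ProjectiveResolution K) := HasProjectiveResolution.out
  have hexact := (P.complex.shortExact_linearYonedaObjFunctor_map hS).homology_exact₂ m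
  exact (hexact.isZero_X₂ ((h₁.of_iso (P.isoExt m _).symm).eq_of_src _ _)
    ((h₃.of_iso (P.isoExt m _).symm).eq_of_tgt _ _)).of_iso (P.isoExt m _)

variable [IsLocalRing A]

lemma isZero_extMod_of_lt_localDepth {M : ModuleCat A} {m : ℕ} (hm : (m : ℕ∞) < localDepth A M) :
    IsZero (extMod A (ModuleCat.of A (ResidueField A)) M m) :=
  ModuleCat.isZero_iff_subsingleton.mpr <| not_nontrivial_iff_subsingleton.mp fun h ↦
    (sInf_le ⟨m, rfl, h⟩ : localDepth A M ≤ m).not_gt hm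

lemma min_localDepth_le_of_shortExact {S : ShortComplex (ModuleCat A)} (hS : S.ShortExact) :
    min (localDepth A S.X₁) (localDepth A S.X₃) ≤ localDepth A S.X₂ := by
  refine le_sInf ?_
  rintro _ ⟨m, rfl, hm⟩
  by_contra! hlt
  rw [lt_min_iff] at hlt
  have hzero := isZero_extMod_of_shortExact _ hS m (isZero_extMod_of_lt_localDepth hlt.1)
    (isZero_extMod_of_lt_localDepth hlt.2)
  exact not_subsingleton_iff_nontrivial.mpr hm (ModuleCat.isZero_iff_subsingleton.mp hzero)

end Depth

lemma SerreCond.of_exact {R : Type} [CommRing R] {n : ℕ} {L M N : ModuleCat R}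
    {f : L →ₗ[R] M} {g : M →ₗ[R] N} (hf : Function.Injective f) (hg : Function.Surjective g)
    (hfg : Function.Exact f g) (hL : SerreCond R n L) (hN : SerreCond R n N) :
    SerreCond R n M := by
  intro p
  let S := p.asIdeal.primeCompl
  let Rp := Localization.AtPrime p.asIdeal
  let f' : LocalizedModule S L →ₗ[Rp] LocalizedModule S M :=
    IsLocalizedModule.mapExtendScalars S (LocalizedModule.mkLinearMap S L)
      (LocalizedModule.mkLinearMap S M) Rp f
  let g' : LocalizedModule S M →ₗ[Rp] LocalizedModule S N :=
    IsLocalizedModule.mapExtendScalars S (LocalizedModule.mkLinearMap S M)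
      (LocalizedModule.mkLinearMap S N) Rp g
  have hf' : Function.Injective f' := IsLocalizedModule.map_injective S _ _ f hf
  have hg' : Function.Surjective g' := IsLocalizedModule.map_surjective S _ _ g hg
  have hfg' : Function.Exact f' g' := IsLocalizedModule.map_exact S _ _ _ f g hfg
  have hSp := ModuleCat.shortComplex_shortExact
    (ModuleCat.shortComplexOfCompEqZero f' g' hfg'.linearMap_comp_eq_zero) hfg' hf' hg'
  exact (le_min (hL p) (hN p)).trans (min_localDepth_le_of_shortExact hSp :)

section Syzygy

variable (R : Type) [CommRing R]

lemma isSyzygyOf_of_subsingleton :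
    ∀ (n : ℕ) (M : ModuleCat R), Subsingleton M → IsSyzygyOf R n M
  | 0, _, _ => trivial
  | n + 1, _, _ => ⟨ModuleCat.of R PUnit, 0, inferInstance, inferInstance,
      fun a b _ ↦ Subsingleton.elim a b,
      isSyzygyOf_of_subsingleton n _ (Submodule.Quotient.mk_surjective _).subsingleton⟩

lemma isSyzygyOf_self : ∀ n, IsSyzygyOf R n (ModuleCat.of R R)
  | 0 => trivial
  | n + 1 => ⟨ModuleCat.of R R, LinearMap.id, Module.Finite.self R, inferInstance,
      Function.injective_id, isSyzygyOf_of_subsingleton R n _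
        (Submodule.Quotient.subsingleton_iff.mpr LinearMap.range_id)⟩

lemma isSyzygyOf_of_linearEquiv :
    ∀ (n : ℕ) {M : ModuleCat.{v} R} {M' : ModuleCat.{w} R}, (M ≃ₗ[R] M') →
      IsSyzygyOf R n M → IsSyzygyOf R n M'
  | 0, _, _, _, _ => trivial
  | n + 1, _, _, e, ⟨P, f, _, _, hf, hP⟩ => by
    have : Small.{w} P := Module.Finite.small.{w} R P
    let eP : P ≃ₗ[R] Shrink.{w} P := (Shrink.linearEquiv R P).symm
    let f' : _ →ₗ[R] ModuleCat.of R (Shrink.{w} P) := eP.toLinearMap ∘ₗ f ∘ₗ e.symm.toLinearMap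
    have hrange : (LinearMap.range f).map eP.toLinearMap = LinearMap.range f' := by
      rw [LinearMap.range_comp, LinearMap.range_comp_of_range_eq_top _ e.symm.range]
    exact ⟨_, f', inferInstance, inferInstance, eP.injective.comp (hf.comp e.symm.injective),
      isSyzygyOf_of_linearEquiv n (Submodule.Quotient.equiv _ _ eP hrange) hP⟩

lemma isSyzygyOf_shrink_iff (n : ℕ) (M : ModuleCat.{v} R) [Small.{w} M] :
    IsSyzygyOf R n (ModuleCat.of R (Shrink.{w} M)) ↔ IsSyzygyOf R n M :=
  ⟨isSyzygyOf_of_linearEquiv R n (Shrink.linearEquiv R M),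
    isSyzygyOf_of_linearEquiv R n (Shrink.linearEquiv R M).symm⟩

end Syzygy

lemma exists_exact_shrink {R : Type*} [Semiring R] {L M N : Type*} [AddCommMonoid L]
    [AddCommMonoid M] [AddCommMonoid N] [Module R L] [Module R M] [Module R N]
    [Small.{w} L] [Small.{w} M] [Small.{w} N] {f : L →ₗ[R] M} {g : M →ₗ[R] N}
    (hf : Function.Injective f) (hg : Function.Surjective g) (hfg : Function.Exact f g) :
    ∃ (f₀ : Shrink.{w} L →ₗ[R] Shrink.{w} M) (g₀ : Shrink.{w} M →ₗ[R] Shrink.{w} N),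
      Function.Injective f₀ ∧ Function.Surjective g₀ ∧ Function.Exact f₀ g₀ := by
  let eL := Shrink.linearEquiv.{w} R L
  let eM := Shrink.linearEquiv.{w} R M
  let eN := Shrink.linearEquiv.{w} R N
  refine ⟨eM.symm.toLinearMap ∘ₗ f ∘ₗ eL.toLinearMap, eN.symm.toLinearMap ∘ₗ g ∘ₗ eM.toLinearMap,
    eM.symm.injective.comp (hf.comp eL.injective), eN.symm.surjective.comp (hg.comp eM.surjective),
    ?_⟩
  exact (eM.conj_symm_exact_iff_exact _ _).mpr
    (eL.precomp_exact_iff_exact.mpr (eN.symm.postcomp_exact_iff_exact.mpr hfg))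

theorem syz_eq_serre_implies_general (R : Type) [CommRing R] (n : ℕ)
    (h : ∀ M : ModuleCat R, Module.Finite R M → (IsSyzygyOf R n M ↔ SerreCond R n M)) :
    SerreCond R n (ModuleCat.of R R) ∧
      ∀ (L M N : ModuleCat R), Module.Finite R L → Module.Finite R M → Module.Finite R N →
        ∀ (f : L →ₗ[R] M) (g : M →ₗ[R] N), Function.Injective f → Function.Surjective g →
          LinearMap.range f = LinearMap.ker g →
          IsSyzygyOf R n L → IsSyzygyOf R n N → IsSyzygyOf R n M := by
  refine ⟨(h _ (Module.Finite.self R)).mp (isSyzygyOf_self R n), ?_⟩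
  intro L M N _ _ _ f g hf hg hfg hL hN
  have := Module.Finite.small.{0} R L
  have := Module.Finite.small.{0} R M
  have := Module.Finite.small.{0} R N
  obtain ⟨f₀, g₀, hf₀, hg₀, hfg₀⟩ :=
    exists_exact_shrink.{0} hf hg (LinearMap.exact_iff.mpr hfg.symm)
  have hM : SerreCond R n (ModuleCat.of R (Shrink.{0} M)) :=
    SerreCond.of_exact (L := ModuleCat.of R _) hf₀ hg₀ hfg₀
      ((h _ inferInstance).mp ((isSyzygyOf_shrink_iff R n L).mpr hL))
      ((h _ inferInstance).mp ((isSyzygyOf_shrink_iff R n N).mpr hN))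
  exact (isSyzygyOf_shrink_iff R n M).mp ((h _ inferInstance).mpr hM)

/-- If `syz_n(R) = S_n(R)`, then `R` satisfies `(S_n)` and `syz_n(R)` is closed under
extensions. -/
theorem syz_eq_serre_implies (R : Type) [CommRing R] [IsNoetherianRing R] (n : ℕ)
    (h : ∀ M : ModuleCat R, Module.Finite R M → (IsSyzygyOf R n M ↔ SerreCond R n M)) :
    SerreCond R n (ModuleCat.of R R) ∧
      ∀ (L M N : ModuleCat R), Module.Finite R L → Module.Finite R M → Module.Finite R N →
        ∀ (f : L →ₗ[R] M) (g : M →ₗ[R] N), Function.Injective f → Function.Surjective g →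
          LinearMap.range f = LinearMap.ker g →
          IsSyzygyOf R n L → IsSyzygyOf R n N → IsSyzygyOf R n M :=
  syz_eq_serre_implies_general R n h
end
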